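/- arXiv:1803.06216 — 7 statements merged into one kernel-verified Lean document; each statement's English description precedes it below -/
import Mathlib

section
/- Let R₁ and R₂ be two diagonal-anchored axis-parallel rectangles (each anchored either above or below the diagonal, with positive side lengths), and let L₁ and L₂ be their associated anchored L-frames. Then R₁ ∩ R₂ ≠ ∅ if and only if L₁ ∩ L₂ ≠ ∅. Consequently, the intersection graph of any finite family of diagonal-anchored rectangles equals the intersection graph of the associated family of diagonal-anchored L-frames. -/
/-- The above-anchored rectangle `R⁺(t,h,w) = [t, t+w] × [-t, -t+h]`. -/
def Rplus (t h w : ℝ) : Set (ℝ × ℝ) := Set.Icc t (t + w) ×ˢ Set.Icc (-t) (-t + h)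

/-- The below-anchored rectangle `R⁻(t,h,w) = [t-w, t] × [-t-h, -t]`. -/
def Rminus (t h w : ℝ) : Set (ℝ × ℝ) := Set.Icc (t - w) t ×ˢ Set.Icc (-t - h) (-t)

/-- The above-anchored L-frame `A(t,h,w) = ({t} × [-t, -t+h]) ∪ ([t, t+w] × {-t})`. -/
def Aframe (t h w : ℝ) : Set (ℝ × ℝ) :=
  ({t} : Set ℝ) ×ˢ Set.Icc (-t) (-t + h) ∪ Set.Icc t (t + w) ×ˢ ({-t} : Set ℝ)

/-- The below-anchored L-frame `B(t,h,w) = ({t} × [-t-h, -t]) ∪ ([t-w, t] × {-t})`. -/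
def Bframe (t h w : ℝ) : Set (ℝ × ℝ) :=
  ({t} : Set ℝ) ×ˢ Set.Icc (-t - h) (-t) ∪ Set.Icc (t - w) t ×ˢ ({-t} : Set ℝ)

/-- A diagonal-anchored rectangle, anchored above (`side = true`) or below (`side = false`). -/
def Rect (side : Bool) (t h w : ℝ) : Set (ℝ × ℝ) := if side then Rplus t h w else Rminus t h w

/-- The associated diagonal-anchored L-frame. -/
def Lfr (side : Bool) (t h w : ℝ) : Set (ℝ × ℝ) := if side then Aframe t h w else Bframe t h w

/-- The intersection graph of a family of subsets of the plane. -/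
def interGraph {V : Type*} (F : V → Set (ℝ × ℝ)) : SimpleGraph V where
  Adj u v := u ≠ v ∧ (F u ∩ F v).Nonempty
  symm := by
    constructor
    intro u v h
    exact ⟨h.1.symm, by rw [Set.inter_comm]; exact h.2⟩
  loopless := by
    constructor
    intro u h
    exact h.1 rfl

/-!
A frame lies inside its rectangle, so one direction is immediate. Conversely, two rectangles
anchored on the same side with corners at parameters `t₁ ≤ t₂` that meet must contain the point
`(t₂, -t₁)` (resp. `(t₁, -t₂)` below the diagonal), which lies on both frames; two rectangles
anchored on opposite sides lie in opposite closed quadrants of their corners, so they can only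
meet when the corners coincide, and the common corner lies on both frames.
-/

section Frames

variable {t t₁ t₂ h h₁ h₂ w w₁ w₂ : ℝ}

theorem Aframe_subset_Rplus (hh : 0 ≤ h) (hw : 0 ≤ w) : Aframe t h w ⊆ Rplus t h w := by
  rintro ⟨x, y⟩ (⟨rfl, hy, hy'⟩ | ⟨hx, rfl⟩)
  · exact ⟨⟨le_rfl, by linarith⟩, hy, hy'⟩
  · exact ⟨hx, le_rfl, by linarith⟩

theorem Bframe_subset_Rminus (hh : 0 ≤ h) (hw : 0 ≤ w) : Bframe t h w ⊆ Rminus t h w := by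
  rintro ⟨x, y⟩ (⟨rfl, hy, hy'⟩ | ⟨hx, rfl⟩)
  · exact ⟨⟨by linarith, le_rfl⟩, hy, hy'⟩
  · exact ⟨hx, by linarith, le_rfl⟩

theorem Lfr_subset_Rect (s : Bool) (hh : 0 ≤ h) (hw : 0 ≤ w) : Lfr s t h w ⊆ Rect s t h w := by
  cases s
  · exact Bframe_subset_Rminus hh hw
  · exact Aframe_subset_Rplus hh hw

theorem Aframe_inter_nonempty_of_le (hle : t₁ ≤ t₂)
    (hR : (Rplus t₁ h₁ w₁ ∩ Rplus t₂ h₂ w₂).Nonempty) :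
    (Aframe t₁ h₁ w₁ ∩ Aframe t₂ h₂ w₂).Nonempty := by
  obtain ⟨p, ⟨⟨-, hx₁⟩, hy₁, -⟩, ⟨hx₂, -⟩, -, hy₂⟩ := hR
  exact ⟨(t₂, -t₁), Or.inr ⟨⟨hle, hx₂.trans hx₁⟩, rfl⟩, Or.inl ⟨rfl, by linarith, by linarith⟩⟩

theorem Bframe_inter_nonempty_of_le (hle : t₁ ≤ t₂)
    (hR : (Rminus t₁ h₁ w₁ ∩ Rminus t₂ h₂ w₂).Nonempty) :
    (Bframe t₁ h₁ w₁ ∩ Bframe t₂ h₂ w₂).Nonempty := by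
  obtain ⟨p, ⟨⟨-, hx₁⟩, hy₁, -⟩, ⟨hx₂, -⟩, -, hy₂⟩ := hR
  exact ⟨(t₁, -t₂), Or.inl ⟨rfl, by linarith, by linarith⟩, Or.inr ⟨⟨hx₂.trans hx₁, hle⟩, rfl⟩⟩

theorem Aframe_inter_nonempty_of_Rplus (hR : (Rplus t₁ h₁ w₁ ∩ Rplus t₂ h₂ w₂).Nonempty) :
    (Aframe t₁ h₁ w₁ ∩ Aframe t₂ h₂ w₂).Nonempty := by
  rcases le_total t₁ t₂ with hle | hle
  · exact Aframe_inter_nonempty_of_le hle hR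
  · rw [Set.inter_comm] at hR ⊢
    exact Aframe_inter_nonempty_of_le hle hR

theorem Bframe_inter_nonempty_of_Rminus (hR : (Rminus t₁ h₁ w₁ ∩ Rminus t₂ h₂ w₂).Nonempty) :
    (Bframe t₁ h₁ w₁ ∩ Bframe t₂ h₂ w₂).Nonempty := by
  rcases le_total t₁ t₂ with hle | hle
  · exact Bframe_inter_nonempty_of_le hle hR
  · rw [Set.inter_comm] at hR ⊢
    exact Bframe_inter_nonempty_of_le hle hR

theorem eq_of_Rplus_inter_Rminus_nonempty (hR : (Rplus t₁ h₁ w₁ ∩ Rminus t₂ h₂ w₂).Nonempty) :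
    t₁ = t₂ := by
  obtain ⟨p, ⟨⟨hx₁, -⟩, hy₁, -⟩, ⟨-, hx₂⟩, -, hy₂⟩ := hR
  linarith

theorem corner_mem_Aframe (hh : 0 ≤ h) : (t, -t) ∈ Aframe t h w :=
  Or.inl ⟨rfl, le_rfl, by linarith⟩

theorem corner_mem_Bframe (hh : 0 ≤ h) : (t, -t) ∈ Bframe t h w :=
  Or.inl ⟨rfl, by linarith, le_rfl⟩

theorem Aframe_inter_Bframe_nonempty_of_Rplus_inter_Rminus (hh₁ : 0 ≤ h₁) (hh₂ : 0 ≤ h₂)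
    (hR : (Rplus t₁ h₁ w₁ ∩ Rminus t₂ h₂ w₂).Nonempty) :
    (Aframe t₁ h₁ w₁ ∩ Bframe t₂ h₂ w₂).Nonempty := by
  obtain rfl := eq_of_Rplus_inter_Rminus_nonempty hR
  exact ⟨_, corner_mem_Aframe hh₁, corner_mem_Bframe hh₂⟩

theorem Lfr_inter_nonempty_of_Rect (s₁ s₂ : Bool) (hh₁ : 0 ≤ h₁) (hh₂ : 0 ≤ h₂)
    (hR : (Rect s₁ t₁ h₁ w₁ ∩ Rect s₂ t₂ h₂ w₂).Nonempty) :
    (Lfr s₁ t₁ h₁ w₁ ∩ Lfr s₂ t₂ h₂ w₂).Nonempty := by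
  cases s₁ <;> cases s₂
  · exact Bframe_inter_nonempty_of_Rminus hR
  · rw [Set.inter_comm] at hR ⊢
    exact Aframe_inter_Bframe_nonempty_of_Rplus_inter_Rminus hh₂ hh₁ hR
  · exact Aframe_inter_Bframe_nonempty_of_Rplus_inter_Rminus hh₁ hh₂ hR
  · exact Aframe_inter_nonempty_of_Rplus hR

theorem Rect_inter_nonempty_iff (s₁ s₂ : Bool) (hh₁ : 0 ≤ h₁) (hw₁ : 0 ≤ w₁) (hh₂ : 0 ≤ h₂)
    (hw₂ : 0 ≤ w₂) :
    (Rect s₁ t₁ h₁ w₁ ∩ Rect s₂ t₂ h₂ w₂).Nonempty ↔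
      (Lfr s₁ t₁ h₁ w₁ ∩ Lfr s₂ t₂ h₂ w₂).Nonempty :=
  ⟨Lfr_inter_nonempty_of_Rect s₁ s₂ hh₁ hh₂, fun hL =>
    hL.mono (Set.inter_subset_inter (Lfr_subset_Rect s₁ hh₁ hw₁) (Lfr_subset_Rect s₂ hh₂ hw₂))⟩

end Frames

theorem interGraph_congr {V : Type*} {F G : V → Set (ℝ × ℝ)}
    (hFG : ∀ u v, (F u ∩ F v).Nonempty ↔ (G u ∩ G v).Nonempty) : interGraph F = interGraph G := by
  ext u v
  exact and_congr_right fun _ => hFG u v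

/-- Two diagonal-anchored rectangles (with positive side lengths) intersect iff their
associated diagonal-anchored L-frames intersect; consequently the intersection graph of any
finite family of diagonal-anchored rectangles equals the intersection graph of the
associated family of diagonal-anchored L-frames. -/
theorem rect_inter_iff_frame_inter_and_graphs_eq :
    (∀ (s₁ s₂ : Bool) (t₁ t₂ h₁ h₂ w₁ w₂ : ℝ),
      0 < h₁ → 0 < w₁ → 0 < h₂ → 0 < w₂ →
      ((Rect s₁ t₁ h₁ w₁ ∩ Rect s₂ t₂ h₂ w₂).Nonempty ↔
        (Lfr s₁ t₁ h₁ w₁ ∩ Lfr s₂ t₂ h₂ w₂).Nonempty)) ∧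
    (∀ (V : Type) [Fintype V] (s : V → Bool) (t h w : V → ℝ),
      (∀ v, 0 < h v) → (∀ v, 0 < w v) →
      interGraph (fun v => Rect (s v) (t v) (h v) (w v)) =
        interGraph (fun v => Lfr (s v) (t v) (h v) (w v))) :=
  ⟨fun s₁ s₂ _ _ _ _ _ _ hh₁ hw₁ hh₂ hw₂ =>
      Rect_inter_nonempty_iff s₁ s₂ hh₁.le hw₁.le hh₂.le hw₂.le,
    fun _ _ s _ _ _ hh hw => interGraph_congr fun u v =>
      Rect_inter_nonempty_iff (s u) (s v) (hh u).le (hw u).le (hh v).le (hw v).le⟩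
end

section
/- Under the setup, no two top arcs cross: there do not exist pairs (b₁,r₁) ∈ E' and (b₂,r₂) ∈ E', each admitting a top witness, such that, writing α = min(t b₁, t r₁), β = max(t b₁, t r₁), γ = min(t b₂, t r₂), δ = max(t b₂, t r₂), the intervals (α,β) and (γ,δ) interleave. -/
/-- A set of vertices is a dominating set: every vertex is in it or adjacent to a member. -/
def IsDomSet {V : Type*} (G : SimpleGraph V) (D : Set V) : Prop :=
  ∀ v, v ∈ D ∨ ∃ u ∈ D, G.Adj u v

/-- Euclidean distance between the corners `(t b, -(t b))` and `(t r, -(t r))` of the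
L-frames indexed by `b` and `r`. -/
noncomputable def cornerDist {V : Type*} (t : V → ℝ) (b r : V) : ℝ :=
  Real.sqrt ((t b - t r) ^ 2 + ((-(t b)) - (-(t r))) ^ 2)

/-- `(b,r) ∈ S(u)`: `b ∈ B`, `r ∈ R`, and both frames `F b` and `F r` intersect `F u`. -/
def InS {V : Type*} (F : V → Set (ℝ × ℝ)) (B R : Set V) (u b r : V) : Prop :=
  b ∈ B ∧ r ∈ R ∧ (F b ∩ F u).Nonempty ∧ (F r ∩ F u).Nonempty

/-- `u` is a witness of `(b,r)`: `(b,r) ∈ S(u)` and the distance between the corners of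
`F b` and `F r` is minimum among all pairs in `S(u)`. -/
def IsWitness {V : Type*} (F : V → Set (ℝ × ℝ)) (t : V → ℝ) (B R : Set V)
    (u b r : V) : Prop :=
  InS F B R u b r ∧ ∀ b' r', InS F B R u b' r' → cornerDist t b r ≤ cornerDist t b' r'

/-- `(b,r) ∈ E'`: the pair admits a witness. -/
def InE' {V : Type*} (F : V → Set (ℝ × ℝ)) (t : V → ℝ) (B R : Set V) (b r : V) : Prop :=
  ∃ u, IsWitness F t B R u b r

/-- `u` is a top witness of `(b,r)`. -/
def TopWitness {V : Type*} (F : V → Set (ℝ × ℝ)) (t : V → ℝ) (B R : Set V)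
    (u b r : V) : Prop :=
  IsWitness F t B R u b r ∧ t b ≤ t u ∧ t r ≤ t u

/-- `u` is a down witness of `(b,r)`. -/
def DownWitness {V : Type*} (F : V → Set (ℝ × ℝ)) (t : V → ℝ) (B R : Set V)
    (u b r : V) : Prop :=
  IsWitness F t B R u b r ∧ t u ≤ t b ∧ t u ≤ t r

/-- `u` is a mixed witness of `(b,r)`. -/
def MixedWitness {V : Type*} (F : V → Set (ℝ × ℝ)) (t : V → ℝ) (B R : Set V)
    (u b r : V) : Prop :=
  IsWitness F t B R u b r ∧ min (t b) (t r) < t u ∧ t u < max (t b) (t r)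

/-- Open intervals `(p,q)` and `(r,s)` interleave. -/
def Interleave (p q r s : ℝ) : Prop :=
  (p < r ∧ r < q ∧ q < s) ∨ (r < p ∧ p < s ∧ s < q)

/-!
Let the two top arcs span `(α, β)` and `(γ, δ)` with `α < γ < β < δ`, and let their top witnesses
be `u₁` and `u₂`. A frame with corner left of `u` meets `F u` only where its horizontal arm
crosses the vertical arm of `F u`; so the vertical arm of `F u₁` reaches down to level `-α`, and
that of `F u₂` to level `-γ`. If `t u₁ ≤ t u₂`, the endpoint of the second arc at `γ` reaches
`u₂`, hence also `u₁`, and being strictly inside `(α, β)` it gives `u₁` a pair closer than its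
own. If `t u₂ ≤ t u₁`, the endpoint of the first arc at `β` likewise reaches `u₂` from strictly
inside `(γ, δ)`.
-/

lemma abs_sub_lt_abs_sub_of_mem_Ioo_min_max {a b x : ℝ}
    (hx : x ∈ Set.Ioo (min a b) (max a b)) : |x - b| < |a - b| := by
  grind [abs_lt, lt_abs]

lemma Aframe_inter_nonempty_iff {ta ha wa tu hu wu : ℝ} (hlt : ta < tu) :
    (Aframe ta ha wa ∩ Aframe tu hu wu).Nonempty ↔ tu ≤ ta + wa ∧ tu - ta ≤ hu := by
  constructor
  · rintro ⟨p, hpa, hpu⟩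
    simp only [Aframe, Set.mem_union, Set.mem_prod, Set.mem_singleton_iff,
      Set.mem_Icc] at hpa hpu
    rcases hpa with ⟨_, _, _⟩ | ⟨⟨_, _⟩, _⟩ <;> rcases hpu with ⟨_, _, _⟩ | ⟨⟨_, _⟩, _⟩ <;>
      constructor <;> linarith
  · rintro ⟨hreach, hdrop⟩
    refine ⟨(tu, -ta), Or.inr ⟨⟨hlt.le, hreach⟩, rfl⟩, Or.inl ⟨rfl, ?_, ?_⟩⟩ <;>
      dsimp only <;> linarith

lemma cornerDist_eq {V : Type*} (t : V → ℝ) (b r : V) :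
    cornerDist t b r = Real.sqrt 2 * |t b - t r| := by
  rw [cornerDist, show (t b - t r) ^ 2 + (-t b - -t r) ^ 2 = 2 * (t b - t r) ^ 2 by ring,
    Real.sqrt_mul zero_le_two, Real.sqrt_sq_eq_abs]

section Frames

variable {V : Type*} {t h w : V → ℝ} {F : V → Set (ℝ × ℝ)} {B R : Set V}

/-- The horizontal arm of `F a` reaches `F u`, hence `F v`; the vertical arm of `F v` reaches down
to the level of `F s`, hence to that of `F a`. -/
lemma inter_nonempty_of_reach (hF : ∀ v, F v = Aframe (t v) (h v) (w v)) {a s u v : V}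
    (hav : t a < t v) (hvu : t v ≤ t u) (hsa : t s ≤ t a)
    (hau : (F a ∩ F u).Nonempty) (hsv : (F s ∩ F v).Nonempty) :
    (F a ∩ F v).Nonempty := by
  rw [hF, hF] at hau hsv ⊢
  obtain ⟨hreach, -⟩ := (Aframe_inter_nonempty_iff (hav.trans_le hvu)).1 hau
  obtain ⟨-, hdrop⟩ := (Aframe_inter_nonempty_iff (hsa.trans_lt hav)).1 hsv
  exact (Aframe_inter_nonempty_iff hav).2 ⟨hvu.trans hreach, by linarith⟩

lemma InS.exists_eq_min {u b r : V} (hS : InS F B R u b r) :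
    ∃ z, (z ∈ B ∨ z ∈ R) ∧ (F z ∩ F u).Nonempty ∧ t z = min (t b) (t r) := by
  rcases min_choice (t b) (t r) with hmin | hmin
  · exact ⟨b, Or.inl hS.1, hS.2.2.1, hmin.symm⟩
  · exact ⟨r, Or.inr hS.2.1, hS.2.2.2, hmin.symm⟩

lemma InS.exists_eq_max {u b r : V} (hS : InS F B R u b r) :
    ∃ z, (z ∈ B ∨ z ∈ R) ∧ (F z ∩ F u).Nonempty ∧ t z = max (t b) (t r) := by
  rcases max_choice (t b) (t r) with hmax | hmax
  · exact ⟨b, Or.inl hS.1, hS.2.2.1, hmax.symm⟩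
  · exact ⟨r, Or.inr hS.2.1, hS.2.2.2, hmax.symm⟩

lemma IsWitness.abs_sub_le {u b r b' r' : V} (hwit : IsWitness F t B R u b r)
    (hS : InS F B R u b' r') : |t b - t r| ≤ |t b' - t r'| := by
  have hle := hwit.2 b' r' hS
  rw [cornerDist_eq, cornerDist_eq] at hle
  exact le_of_mul_le_mul_left hle (Real.sqrt_pos.2 zero_lt_two)

lemma IsWitness.notMem_Ioo {u b r z : V} (hwit : IsWitness F t B R u b r)
    (hz : z ∈ B ∨ z ∈ R) (hzu : (F z ∩ F u).Nonempty) :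
    t z ∉ Set.Ioo (min (t b) (t r)) (max (t b) (t r)) := by
  intro hmem
  obtain ⟨hb, hr, hbu, hru⟩ := hwit.1
  rcases hz with hzB | hzR
  · have hcloser := abs_sub_lt_abs_sub_of_mem_Ioo_min_max hmem
    exact (hwit.abs_sub_le ⟨hzB, hr, hzu, hru⟩).not_gt hcloser
  · rw [min_comm, max_comm] at hmem
    have hcloser := abs_sub_lt_abs_sub_of_mem_Ioo_min_max hmem
    rw [abs_sub_comm, abs_sub_comm (t r)] at hcloser
    exact (hwit.abs_sub_le ⟨hb, hzR, hbu, hzu⟩).not_gt hcloser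

lemma TopWitness.not_cross (hF : ∀ v, F v = Aframe (t v) (h v) (w v))
    {u₁ b₁ r₁ u₂ b₂ r₂ : V} (h₁ : TopWitness F t B R u₁ b₁ r₁)
    (h₂ : TopWitness F t B R u₂ b₂ r₂)
    (hαγ : min (t b₁) (t r₁) < min (t b₂) (t r₂))
    (hγβ : min (t b₂) (t r₂) < max (t b₁) (t r₁))
    (hβδ : max (t b₁) (t r₁) < max (t b₂) (t r₂)) : False := by
  have hβu₁ : max (t b₁) (t r₁) ≤ t u₁ := max_le h₁.2.1 h₁.2.2
  have hδu₂ : max (t b₂) (t r₂) ≤ t u₂ := max_le h₂.2.1 h₂.2.2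
  obtain ⟨a₁, -, ha₁u, ha₁⟩ := h₁.1.1.exists_eq_min (t := t)
  obtain ⟨c₁, hc₁BR, hc₁u, hc₁⟩ := h₁.1.1.exists_eq_max (t := t)
  obtain ⟨a₂, ha₂BR, ha₂u, ha₂⟩ := h₂.1.1.exists_eq_min (t := t)
  rcases le_total (t u₁) (t u₂) with hu | hu
  · refine h₁.1.notMem_Ioo ha₂BR ?_ ⟨ha₂ ▸ hαγ, ha₂ ▸ hγβ⟩
    exact inter_nonempty_of_reach hF (by linarith) hu (by linarith) ha₂u ha₁u
  · refine h₂.1.notMem_Ioo hc₁BR ?_ ⟨hc₁ ▸ hγβ, hc₁ ▸ hβδ⟩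
    exact inter_nonempty_of_reach hF (by linarith) hu (by linarith) hc₁u ha₂u

end Frames

theorem no_two_top_arcs_cross_general {V : Type*}
    (t h w : V → ℝ)
    (F : V → Set (ℝ × ℝ)) (hF : ∀ v, F v = Aframe (t v) (h v) (w v))
    (B R : Set V) :
    ¬ ∃ (b₁ r₁ b₂ r₂ u₁ u₂ : V),
        TopWitness F t B R u₁ b₁ r₁ ∧ TopWitness F t B R u₂ b₂ r₂ ∧
        Interleave (min (t b₁) (t r₁)) (max (t b₁) (t r₁))
          (min (t b₂) (t r₂)) (max (t b₂) (t r₂)) := by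
  rintro ⟨b₁, r₁, b₂, r₂, u₁, u₂, h₁, h₂, ⟨hαγ, hγβ, hβδ⟩ | ⟨hγα, hαδ, hδβ⟩⟩
  · exact h₁.not_cross hF h₂ hαγ hγβ hβδ
  · exact h₂.not_cross hF h₁ hγα hαδ hδβ

/-- No two top arcs cross. -/
theorem no_two_top_arcs_cross {V : Type*} [Fintype V]
    (t h w : V → ℝ) (hh : ∀ v, 0 ≤ h v) (hw : ∀ v, 0 ≤ w v)
    (F : V → Set (ℝ × ℝ)) (hF : ∀ v, F v = Aframe (t v) (h v) (w v))
    (B R : Set V) (hBR : Disjoint B R)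
    (hB : IsDomSet (interGraph F) B) (hR : IsDomSet (interGraph F) R) :
    ¬ ∃ (b₁ r₁ b₂ r₂ u₁ u₂ : V),
        TopWitness F t B R u₁ b₁ r₁ ∧ TopWitness F t B R u₂ b₂ r₂ ∧
        Interleave (min (t b₁) (t r₁)) (max (t b₁) (t r₁))
          (min (t b₂) (t r₂)) (max (t b₂) (t r₂)) :=
  no_two_top_arcs_cross_general t h w F hF B R
end

section
/- For reals p < q and r < s with {p,q} ∩ {r,s} = ∅, the below-diagonal hooks H(p,q) and H(r,s) have nonempty intersection if and only if p < r < q < s or r < p < s < q (i.e., if and only if the intervals (p,q) and (r,s) interleave). -/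
/-- The below-diagonal hook `H(p,q) = ({p} × [-q, -p]) ∪ ([p, q] × {-q})`. -/
def Hook (p q : ℝ) : Set (ℝ × ℝ) :=
  ({p} : Set ℝ) ×ˢ Set.Icc (-q) (-p) ∪ Set.Icc p q ×ˢ ({-q} : Set ℝ)

/-
Two vertical legs meet only if `p = r`, two horizontal legs only if `q = s`. The vertical leg
of `H(p,q)` can meet the horizontal leg of `H(r,s)` only at `(p, -s)`, which lies on both iff
`r ≤ p ≤ s ≤ q`; symmetrically for `(r, -q)`. Distinct endpoints make these inequalities strict.
-/

theorem mk_mem_hook_iff (p q x y : ℝ) :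
    (x, y) ∈ Hook p q ↔ (x = p ∧ -q ≤ y ∧ y ≤ -p) ∨ (p ≤ x ∧ x ≤ q ∧ y = -q) := by
  simp only [Hook, Set.mem_union, Set.mem_prod, Set.mem_singleton_iff, Set.mem_Icc, and_assoc]

theorem mk_mem_hook_of_le_of_le {p q x : ℝ} (hpx : p ≤ x) (hxq : x ≤ q) :
    (x, -q) ∈ Hook p q :=
  (mk_mem_hook_iff p q _ _).2 (Or.inr ⟨hpx, hxq, rfl⟩)

theorem mk_neg_mem_hook_of_le_of_le {p q y : ℝ} (hpy : p ≤ y) (hyq : y ≤ q) :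
    (p, -y) ∈ Hook p q :=
  (mk_mem_hook_iff p q _ _).2 (Or.inl ⟨rfl, neg_le_neg hyq, neg_le_neg hpy⟩)

theorem weak_interleave_of_mem_hook_inter {p q r s : ℝ} {z : ℝ × ℝ}
    (hz : z ∈ Hook p q ∩ Hook r s) :
    p = r ∨ q = s ∨ (p ≤ r ∧ r ≤ q ∧ q ≤ s) ∨ (r ≤ p ∧ p ≤ s ∧ s ≤ q) := by
  obtain ⟨x, y⟩ := z
  rcases (mk_mem_hook_iff p q x y).1 hz.1 with ⟨hxp, hqy, -⟩ | ⟨hpx, hxq, hyq⟩ <;>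
    rcases (mk_mem_hook_iff r s x y).1 hz.2 with ⟨hxr, hsy, -⟩ | ⟨hrx, hxs, hys⟩
  · exact Or.inl (hxp.symm.trans hxr)
  · subst hxp hys
    exact Or.inr (Or.inr (Or.inr ⟨hrx, hxs, by linarith⟩))
  · subst hxr hyq
    exact Or.inr (Or.inr (Or.inl ⟨hpx, hxq, by linarith⟩))
  · exact Or.inr (Or.inl (neg_injective (hyq.symm.trans hys)))

theorem hook_inter_nonempty_of_interleave {p q r s : ℝ} (h : Interleave p q r s) :
    (Hook p q ∩ Hook r s).Nonempty := by
  rcases h with ⟨hpr, hrq, hqs⟩ | ⟨hrp, hps, hsq⟩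
  · exact ⟨(r, -q), mk_mem_hook_of_le_of_le hpr.le hrq.le,
      mk_neg_mem_hook_of_le_of_le hrq.le hqs.le⟩
  · exact ⟨(p, -s), mk_neg_mem_hook_of_le_of_le hps.le hsq.le,
      mk_mem_hook_of_le_of_le hrp.le hps.le⟩

theorem hook_inter_iff_interleave_general (p q r s : ℝ)
    (hdisj : ({p, q} : Set ℝ) ∩ {r, s} = ∅) :
    (Hook p q ∩ Hook r s).Nonempty ↔ Interleave p q r s := by
  rw [← Set.disjoint_iff_inter_eq_empty] at hdisj
  simp only [Set.disjoint_insert_right, Set.mem_insert_iff, Set.mem_singleton_iff, not_or,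
    Set.disjoint_singleton_right] at hdisj
  obtain ⟨⟨hrp, hrq⟩, hsp, hsq⟩ := hdisj
  refine ⟨fun ⟨z, hz⟩ => ?_, hook_inter_nonempty_of_interleave⟩
  rcases weak_interleave_of_mem_hook_inter hz with
    hpr | hqs | ⟨hpr, hrq', hqs⟩ | ⟨hrp', hps, hsq'⟩
  · exact absurd hpr.symm hrp
  · exact absurd hqs.symm hsq
  · exact Or.inl ⟨hpr.lt_of_ne (Ne.symm hrp), hrq'.lt_of_ne hrq, hqs.lt_of_ne (Ne.symm hsq)⟩
  · exact Or.inr ⟨hrp'.lt_of_ne hrp, hps.lt_of_ne (Ne.symm hsp), hsq'.lt_of_ne hsq⟩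

/-- Two below-diagonal hooks with distinct endpoints intersect iff their endpoint
intervals interleave. -/
theorem hook_inter_iff_interleave (p q r s : ℝ) (hpq : p < q) (hrs : r < s)
    (hdisj : ({p, q} : Set ℝ) ∩ {r, s} = ∅) :
    (Hook p q ∩ Hook r s).Nonempty ↔ Interleave p q r s :=
  hook_inter_iff_interleave_general p q r s hdisj
end

section
/- Let α, β : Fin n → [0, 2π) satisfy α i < β i for every i, and suppose the 2n values {α i} ∪ {β i} are pairwise distinct. Then the intersection graph of the chords (the segments [P(α i), P(β i)] of the unit circle) equals the intersection graph of the below-diagonal hooks H(α i, β i): for all i ≠ j, [P(α i), P(β i)] ∩ [P(α j), P(β j)] ≠ ∅ if and only if H(α i, β i) ∩ H(α j, β j) ≠ ∅. In particular, for every k, the chord intersection graph has a dominating set of cardinality k if and only if the hook intersection graph does. -/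
/-!
The affine function `chordSide a b` vanishes on the line through `Pt a` and `Pt b`, and
`chordSide a b (Pt θ) = 4 sin ((b - a) / 2) sin ((b - θ) / 2) sin ((θ - a) / 2)`, so for angles in
`[0, 2π)` it is positive at `Pt θ` exactly when `θ ∈ (a, b)` and negative when `θ ∉ [a, b]`.
That line meets the closed unit disk exactly in the chord, hence the chords `[Pt a, Pt b]` and
`[Pt c, Pt d]` meet iff `chordSide a b` takes values of opposite (weak) signs at `Pt c` and
`Pt d`, i.e., for distinct endpoints, iff the intervals `(a, b)` and `(c, d)` interleave.
Two hooks with distinct endpoints meet iff the same interleaving holds, so the two intersection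
graphs are equal.
-/

/-- The point of the unit circle at angle `θ`. -/
noncomputable def Pt (θ : ℝ) : ℝ × ℝ := (Real.cos θ, Real.sin θ)

open Real Set

lemma sin_add_sin_sub_sin_add (x y : ℝ) :
    sin x + sin y - sin (x + y) = 4 * sin ((x + y) / 2) * sin (x / 2) * sin (y / 2) := by
  have h2 : ∀ z, sin z = 2 * sin (z / 2) * cos (z / 2) := fun z => by
    rw [← sin_two_mul, mul_div_cancel₀ _ two_ne_zero]
  rw [h2 x, h2 y, h2 (x + y), add_div, sin_add, cos_add]
  linear_combination (-2 * sin (x / 2) * cos (x / 2)) * sin_sq_add_cos_sq (y / 2) +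
    (-2 * sin (y / 2) * cos (y / 2)) * sin_sq_add_cos_sq (x / 2)

lemma sin_half_pos_iff {x : ℝ} (h₁ : -(2 * π) < x) (h₂ : x < 2 * π) :
    0 < sin (x / 2) ↔ 0 < x := by
  refine ⟨fun h => ?_, fun h => sin_pos_of_pos_of_lt_pi (by linarith) (by linarith)⟩
  by_contra! hx
  exact h.not_ge (sin_nonpos_of_nonpos_of_neg_pi_le (by linarith) (by linarith))

lemma sin_half_neg_iff {x : ℝ} (h₁ : -(2 * π) < x) (h₂ : x < 2 * π) :
    sin (x / 2) < 0 ↔ x < 0 := by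
  rw [← neg_pos, ← sin_neg, ← neg_div, sin_half_pos_iff (by linarith) (by linarith), neg_pos]

lemma pt_ne_pt {a b : ℝ} (hab : a < b) (hba : b < a + 2 * π) : Pt a ≠ Pt b := by
  intro h
  simp only [Pt, Prod.mk.injEq] at h
  have : cos (b - a) = 1 := by
    rw [cos_sub, ← h.1, ← h.2]; linear_combination cos_sq_add_sin_sq a
  rw [cos_eq_one_iff_of_lt_of_lt (by linarith) (by linarith)] at this
  linarith

def unitDisk : Set (ℝ × ℝ) := {x | x.1 ^ 2 + x.2 ^ 2 ≤ 1}

lemma convex_unitDisk : Convex ℝ unitDisk := by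
  have hsq : ConvexOn ℝ univ fun t : ℝ => t ^ 2 := even_two.convexOn_pow
  simpa [unitDisk] using
    ((hsq.comp_linearMap (LinearMap.fst ℝ ℝ ℝ)).add
      (hsq.comp_linearMap (LinearMap.snd ℝ ℝ ℝ))).convex_le 1

lemma pt_mem_unitDisk (θ : ℝ) : Pt θ ∈ unitDisk := (cos_sq_add_sin_sq θ).le

/-- The cross product `(x - Pt a) × (Pt b - Pt a)`. -/
noncomputable def chordSide (a b : ℝ) : ℝ × ℝ →ᵃ[ℝ] ℝ where
  toFun x := (sin b - sin a) * (x.1 - cos a) - (cos b - cos a) * (x.2 - sin a)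
  linear := (sin b - sin a) • LinearMap.fst ℝ ℝ ℝ - (cos b - cos a) • LinearMap.snd ℝ ℝ ℝ
  map_vadd' x v := by simp; ring

lemma chordSide_apply (a b : ℝ) (x : ℝ × ℝ) :
    chordSide a b x = (sin b - sin a) * (x.1 - cos a) - (cos b - cos a) * (x.2 - sin a) := rfl

lemma chordSide_pt (a b θ : ℝ) :
    chordSide a b (Pt θ) = 4 * sin ((b - a) / 2) * sin ((b - θ) / 2) * sin ((θ - a) / 2) := by
  have h := sin_add_sin_sub_sin_add (b - θ) (θ - a)
  rw [sub_add_sub_cancel, sin_sub, sin_sub, sin_sub] at h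
  rw [chordSide_apply, ← h, Pt]
  ring

lemma chordSide_eq_zero_of_mem_segment {a b : ℝ} {x : ℝ × ℝ}
    (hx : x ∈ segment ℝ (Pt a) (Pt b)) : chordSide a b x = 0 := by
  have : chordSide a b x ∈ segment ℝ (chordSide a b (Pt a)) (chordSide a b (Pt b)) :=
    image_segment ℝ (chordSide a b) _ _ ▸ mem_image_of_mem _ hx
  simpa [chordSide_pt] using this

lemma mem_segment_of_chordSide_eq_zero {a b : ℝ} {x : ℝ × ℝ} (hab : Pt a ≠ Pt b)
    (hx : chordSide a b x = 0) (hxD : x ∈ unitDisk) : x ∈ segment ℝ (Pt a) (Pt b) := by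
  rw [chordSide_apply] at hx
  set u := cos b - cos a
  set v := sin b - sin a
  have hD : 0 < u ^ 2 + v ^ 2 := by
    have : u ≠ 0 ∨ v ≠ 0 := by
      by_contra! h
      exact hab (Prod.ext (by simp [Pt]; linarith [h.1]) (by simp [Pt]; linarith [h.2]))
    rcases this with h | h <;> positivity
  set t := ((x.1 - cos a) * u + (x.2 - sin a) * v) / (u ^ 2 + v ^ 2)
  have htD : t * (u ^ 2 + v ^ 2) = (x.1 - cos a) * u + (x.2 - sin a) * v :=
    div_mul_cancel₀ _ hD.ne'
  have hx₁ : x.1 = cos a + t * u :=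
    mul_right_cancel₀ hD.ne' (by linear_combination v * hx - u * htD)
  have hx₂ : x.2 = sin a + t * v :=
    mul_right_cancel₀ hD.ne' (by linear_combination -u * hx - v * htD)
  have hnorm : x.1 ^ 2 + x.2 ^ 2 = 1 + t * (t - 1) * (u ^ 2 + v ^ 2) := by
    rw [hx₁, hx₂]
    linear_combination (1 - t) * cos_sq_add_sin_sq a + t * cos_sq_add_sin_sq b
  have ht : t * (t - 1) ≤ 0 := by
    have : x.1 ^ 2 + x.2 ^ 2 ≤ 1 := hxD
    nlinarith
  refine ⟨1 - t, t, by nlinarith, by nlinarith, by ring, Prod.ext ?_ ?_⟩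
  · simp [Pt, hx₁]; ring
  · simp [Pt, hx₂]; ring

lemma chordSide_pt_pos_iff {a b θ : ℝ} (ha : 0 ≤ a) (hab : a < b) (hb : b < 2 * π)
    (hθ : θ ∈ Ico 0 (2 * π)) : 0 < chordSide a b (Pt θ) ↔ a < θ ∧ θ < b := by
  have hba : 0 < 4 * sin ((b - a) / 2) :=
    mul_pos four_pos ((sin_half_pos_iff (by linarith) (by linarith)).2 (by linarith))
  obtain ⟨hθ₀, hθ₁⟩ := hθ
  rw [chordSide_pt, mul_assoc, mul_pos_iff_of_pos_left hba, mul_pos_iff,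
    sin_half_pos_iff (by linarith) (by linarith), sin_half_pos_iff (by linarith) (by linarith),
    sin_half_neg_iff (by linarith) (by linarith), sin_half_neg_iff (by linarith) (by linarith)]
  constructor
  · rintro (⟨h₁, h₂⟩ | ⟨h₁, h₂⟩) <;> constructor <;> linarith
  · rintro ⟨h₁, h₂⟩
    exact Or.inl ⟨by linarith, by linarith⟩

lemma chordSide_pt_neg_iff {a b θ : ℝ} (ha : 0 ≤ a) (hab : a < b) (hb : b < 2 * π)
    (hθ : θ ∈ Ico 0 (2 * π)) : chordSide a b (Pt θ) < 0 ↔ θ < a ∨ b < θ := by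
  have hba : 0 < 4 * sin ((b - a) / 2) :=
    mul_pos four_pos ((sin_half_pos_iff (by linarith) (by linarith)).2 (by linarith))
  obtain ⟨hθ₀, hθ₁⟩ := hθ
  rw [chordSide_pt, mul_assoc, ← neg_pos, ← mul_neg, mul_pos_iff_of_pos_left hba, neg_pos,
    mul_neg_iff, sin_half_pos_iff (by linarith) (by linarith),
    sin_half_pos_iff (by linarith) (by linarith),
    sin_half_neg_iff (by linarith) (by linarith), sin_half_neg_iff (by linarith) (by linarith)]
  constructor
  · rintro (⟨h₁, h₂⟩ | ⟨h₁, h₂⟩)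
    · exact Or.inl (by linarith)
    · exact Or.inr (by linarith)
  · rintro (h | h)
    · exact Or.inl ⟨by linarith, by linarith⟩
    · exact Or.inr ⟨by linarith, by linarith⟩

lemma chord_inter_segment_nonempty_iff {a b : ℝ} {p q : ℝ × ℝ} (hab : Pt a ≠ Pt b)
    (hp : p ∈ unitDisk) (hq : q ∈ unitDisk) :
    (segment ℝ (Pt a) (Pt b) ∩ segment ℝ p q).Nonempty ↔
      chordSide a b p * chordSide a b q ≤ 0 := by
  have himage : chordSide a b '' segment ℝ p q = uIcc (chordSide a b p) (chordSide a b q) := by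
    rw [image_segment, segment_eq_uIcc]
  have hzero : (0 : ℝ) ∈ uIcc (chordSide a b p) (chordSide a b q) ↔
      chordSide a b p * chordSide a b q ≤ 0 := by
    rw [mem_uIcc, mul_nonpos_iff]
    tauto
  rw [← hzero, ← himage]
  constructor
  · rintro ⟨x, hx₁, hx₂⟩
    exact ⟨x, hx₂, chordSide_eq_zero_of_mem_segment hx₁⟩
  · rintro ⟨x, hx, hx₀⟩
    exact ⟨x, mem_segment_of_chordSide_eq_zero hab hx₀
      (convex_unitDisk.segment_subset hp hq hx), hx⟩

def Interleaved (a b c d : ℝ) : Prop :=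
  a < c ∧ c < b ∧ b < d ∨ c < a ∧ a < d ∧ d < b

lemma chord_inter_chord_nonempty_iff {a b c d : ℝ} (ha : a ∈ Ico 0 (2 * π))
    (hb : b ∈ Ico 0 (2 * π)) (hc : c ∈ Ico 0 (2 * π)) (hd : d ∈ Ico 0 (2 * π))
    (hab : a < b) (hcd : c < d) (hac : a ≠ c) (hbd : b ≠ d) (had : a ≠ d) (hcb : c ≠ b) :
    (segment ℝ (Pt a) (Pt b) ∩ segment ℝ (Pt c) (Pt d)).Nonempty ↔ Interleaved a b c d := by
  rw [chord_inter_segment_nonempty_iff (pt_ne_pt hab (by linarith [ha.1, hb.2])) (pt_mem_unitDisk c)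
    (pt_mem_unitDisk d), ← not_lt, mul_pos_iff, chordSide_pt_pos_iff ha.1 hab hb.2 hc,
    chordSide_pt_pos_iff ha.1 hab hb.2 hd, chordSide_pt_neg_iff ha.1 hab hb.2 hc,
    chordSide_pt_neg_iff ha.1 hab hb.2 hd, Interleaved]
  grind

lemma mem_hook {p q : ℝ} {x : ℝ × ℝ} :
    x ∈ Hook p q ↔ x.1 = p ∧ -q ≤ x.2 ∧ x.2 ≤ -p ∨ p ≤ x.1 ∧ x.1 ≤ q ∧ x.2 = -q := by
  simp only [Hook, mem_union, mem_prod, mem_singleton_iff, mem_Icc, and_assoc]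

lemma hook_inter_hook_nonempty_iff {p q r s : ℝ} (hpr : p ≠ r) (hqs : q ≠ s) (hps : p ≠ s)
    (hrq : r ≠ q) :
    (Hook p q ∩ Hook r s).Nonempty ↔ Interleaved p q r s := by
  constructor
  · rintro ⟨x, hx₁, hx₂⟩
    rw [mem_hook] at hx₁ hx₂
    rcases hx₁ with ⟨e₁, e₂, e₃⟩ | ⟨e₁, e₂, e₃⟩ <;>
      rcases hx₂ with ⟨f₁, f₂, f₃⟩ | ⟨f₁, f₂, f₃⟩
    · exact absurd (e₁.symm.trans f₁) hpr
    · exact Or.inr ⟨hpr.symm.lt_of_le (by linarith), hps.lt_of_le (by linarith),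
        hqs.symm.lt_of_le (by linarith)⟩
    · exact Or.inl ⟨hpr.lt_of_le (by linarith), hrq.lt_of_le (by linarith),
        hqs.lt_of_le (by linarith)⟩
    · exact absurd (neg_injective (e₃.symm.trans f₃)) hqs
  · rintro (⟨h₁, h₂, h₃⟩ | ⟨h₁, h₂, h₃⟩)
    · exact ⟨(r, -q), mem_hook.2 (by grind), mem_hook.2 (by grind)⟩
    · exact ⟨(p, -s), mem_hook.2 (by grind), mem_hook.2 (by grind)⟩

lemma interGraph_eq_of_inter_nonempty_iff {V : Type*} {F G : V → Set (ℝ × ℝ)}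
    (h : ∀ i j, i ≠ j → ((F i ∩ F j).Nonempty ↔ (G i ∩ G j).Nonempty)) :
    interGraph F = interGraph G := by
  ext i j
  exact and_congr_right (h i j)

/-- The intersection graph of the chords `[P(α i), P(β i)]` of the unit circle equals the
intersection graph of the below-diagonal hooks `H(α i, β i)`; in particular one has a
dominating set of cardinality `k` iff the other does. -/
theorem chord_graph_eq_hook_graph (n : ℕ) (α β : Fin n → ℝ)
    (hα : ∀ i, α i ∈ Set.Ico 0 (2 * Real.pi)) (hβ : ∀ i, β i ∈ Set.Ico 0 (2 * Real.pi))
    (hlt : ∀ i, α i < β i)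
    (hαinj : Function.Injective α) (hβinj : Function.Injective β)
    (hαβ : ∀ i j, α i ≠ β j) :
    (∀ i j, i ≠ j →
      ((segment ℝ (Pt (α i)) (Pt (β i)) ∩ segment ℝ (Pt (α j)) (Pt (β j))).Nonempty ↔
        (Hook (α i) (β i) ∩ Hook (α j) (β j)).Nonempty)) ∧
    (∀ k : ℕ,
      ((∃ D : Finset (Fin n), D.card = k ∧
          IsDomSet (interGraph fun i => segment ℝ (Pt (α i)) (Pt (β i))) ↑D) ↔
        (∃ D : Finset (Fin n), D.card = k ∧
          IsDomSet (interGraph fun i => Hook (α i) (β i)) ↑D))) := by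
  have hadj : ∀ i j, i ≠ j →
      ((segment ℝ (Pt (α i)) (Pt (β i)) ∩ segment ℝ (Pt (α j)) (Pt (β j))).Nonempty ↔
        (Hook (α i) (β i) ∩ Hook (α j) (β j)).Nonempty) := fun i j hij =>
    (chord_inter_chord_nonempty_iff (hα i) (hβ i) (hα j) (hβ j) (hlt i) (hlt j)
      (hαinj.ne hij) (hβinj.ne hij) (hαβ i j) (hαβ j i)).trans
    (hook_inter_hook_nonempty_iff (hαinj.ne hij) (hβinj.ne hij) (hαβ i j) (hαβ j i)).symm
  refine ⟨hadj, fun k => ?_⟩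
  rw [interGraph_eq_of_inter_nonempty_iff hadj]
end

section
/- Let n, m be natural numbers and let C : Fin m → Finset (Fin n) × Bool encode a monotone CNF formula (clause j has variable set (C j).1 and is positive if (C j).2 = true, negative if (C j).2 = false). Let H be the simple graph on the vertex set (Fin n × Fin 3) ⊕ Fin m whose edges are exactly: {(i,0),(i,1)}, {(i,0),(i,2)}, {(i,1),(i,2)} for each i : Fin n; {(i,0), c_j} for each i, j with (C j).2 = true and i ∈ (C j).1; and {(i,1), c_j} for each i, j with (C j).2 = false and i ∈ (C j).1 (where c_j denotes the clause vertex for j). Then H has a dominating set of cardinality at most n if and only if the formula is satisfiable, i.e., there exists σ : Fin n → Bool such that for every j : Fin m there is some i ∈ (C j).1 with σ i = (C j).2. -/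
/-!
The vertex `(i, 2)` is adjacent only to its own triangle, so a dominating set meets each of the
`n` disjoint triangles; having at most `n` elements, it is a transversal: one vertex `(i, κ i)`
per triangle and no clause vertex. A transversal dominates every triangle, and it dominates the
clause vertex `j` iff some variable `i` of the clause is picked at `(i, 0)` (positive clause) or
at `(i, 1)` (negative clause), i.e. iff the assignment `σ i := (κ i = 0)` satisfies clause `j`.
-/

/-- Vertices: a triple of frames `(i,0), (i,1), (i,2)` per variable `i`, plus one clause
vertex per clause `j`. -/
def Vtx (n m : ℕ) := (Fin n × Fin 3) ⊕ Fin m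

/-- Base relation generating the edges of the construction: the triangle on each variable
triple, and edges between `(i,0)` (resp. `(i,1)`) and the positive (resp. negative)
clauses containing variable `i`. -/
def rel13 {n m : ℕ} (C : Fin m → Finset (Fin n) × Bool) : Vtx n m → Vtx n m → Prop
  | Sum.inl (i, _), Sum.inl (i', _) => i = i'
  | Sum.inl (i, k), Sum.inr j =>
      ((k = 0 ∧ (C j).2 = true) ∨ (k = 1 ∧ (C j).2 = false)) ∧ i ∈ (C j).1
  | _, _ => False

/-- The graph `H` of the reduction. -/
def H13 {n m : ℕ} (C : Fin m → Finset (Fin n) × Bool) : SimpleGraph (Vtx n m) :=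
  SimpleGraph.fromRel (rel13 C)

namespace Vtx

variable {n m : ℕ}

instance : DecidableEq (Vtx n m) :=
  inferInstanceAs (DecidableEq ((Fin n × Fin 3) ⊕ Fin m))

-- Terms written with `Sum.inl`/`Sum.inr` are typed `_ ⊕ _` rather than `Vtx n m`, which defeats
-- `rw`; these constructors keep the type.
def var (i : Fin n) (k : Fin 3) : Vtx n m := .inl (i, k)

def clause (j : Fin m) : Vtx n m := .inr j

theorem var_inj {i i' : Fin n} {k k' : Fin 3} :
    (var i k : Vtx n m) = var i' k' ↔ i = i' ∧ k = k' :=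
  Sum.inl_injective.eq_iff.trans Prod.ext_iff

theorem var_ne_clause (i : Fin n) (k : Fin 3) (j : Fin m) : var i k ≠ clause j :=
  Sum.inl_ne_inr

def transversal (κ : Fin n → Fin 3) : Finset (Vtx n m) :=
  Finset.univ.image fun i => var i (κ i)

theorem card_transversal (κ : Fin n → Fin 3) : (transversal κ : Finset (Vtx n m)).card = n := by
  rw [transversal, Finset.card_image_of_injective _ fun i i' h => (var_inj.1 h).1,
    Finset.card_univ, Fintype.card_fin]

theorem var_mem_transversal {κ : Fin n → Fin 3} {i : Fin n} {k : Fin 3} :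
    (var i k : Vtx n m) ∈ transversal κ ↔ κ i = k := by
  simp [transversal, var_inj]

theorem clause_notMem_transversal (κ : Fin n → Fin 3) (j : Fin m) :
    clause j ∉ transversal κ := by
  simp [transversal, var_ne_clause]

theorem exists_mem_transversal_iff {κ : Fin n → Fin 3} {P : Vtx n m → Prop} :
    (∃ u ∈ transversal κ, P u) ↔ ∃ i, P (var i (κ i)) := by
  simp [transversal]

end Vtx

protected theorem Vtx.forall {n m : ℕ} {P : Vtx n m → Prop} :
    (∀ v, P v) ↔ (∀ i k, P (var i k)) ∧ ∀ j, P (clause j) :=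
  ⟨fun h => ⟨fun _ _ => h _, fun _ => h _⟩, fun ⟨hvar, hclause⟩ v =>
    match v with
    | .inl (i, k) => hvar i k
    | .inr j => hclause j⟩

namespace H13

open Vtx

variable {n m : ℕ} (C : Fin m → Finset (Fin n) × Bool)

theorem adj_var_var {i i' : Fin n} {k k' : Fin 3} :
    (H13 C).Adj (var i k) (var i' k') ↔ i = i' ∧ k ≠ k' := by
  rw [H13, SimpleGraph.fromRel_adj, Ne, var_inj]
  change ¬(i = i' ∧ k = k') ∧ (i = i' ∨ i' = i) ↔ _
  grind

theorem adj_var_clause {i : Fin n} {k : Fin 3} {j : Fin m} :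
    (H13 C).Adj (var i k) (clause j) ↔
      i ∈ (C j).1 ∧ ((k = 0 ∧ (C j).2 = true) ∨ (k = 1 ∧ (C j).2 = false)) := by
  rw [H13, SimpleGraph.fromRel_adj]
  exact (and_iff_right (var_ne_clause i k j)).trans ((or_iff_left id).trans and_comm)

theorem exists_eq_var_of_adj_var_two {u : Vtx n m} {i : Fin n} (h : (H13 C).Adj u (var i 2)) :
    ∃ k, u = var i k := by
  rcases u with ⟨i', k⟩ | j
  · exact ⟨k, by rw [← ((adj_var_var C).1 h).1]; rfl⟩
  · have := (adj_var_clause C).1 (h.symm : (H13 C).Adj (var i 2) (clause j))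
    simp at this

theorem isDomSet_transversal_iff (κ : Fin n → Fin 3) :
    IsDomSet (H13 C) (transversal κ : Finset (Vtx n m)) ↔
      ∀ j, ∃ i ∈ (C j).1, (κ i = 0 ∧ (C j).2 = true) ∨ (κ i = 1 ∧ (C j).2 = false) := by
  have var_dominated (i : Fin n) (k : Fin 3) :
      (var i k : Vtx n m) ∈ transversal κ ∨ ∃ u ∈ transversal κ, (H13 C).Adj u (var i k) := by
    rw [var_mem_transversal, exists_mem_transversal_iff]
    by_cases hk : κ i = k
    · exact .inl hk
    · exact .inr ⟨i, (adj_var_var C).2 ⟨rfl, hk⟩⟩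
  simp only [IsDomSet, Finset.mem_coe, Vtx.forall]
  rw [and_iff_right var_dominated]
  simp only [clause_notMem_transversal, false_or, exists_mem_transversal_iff, adj_var_clause]

theorem eq_transversal_of_isDomSet {D : Finset (Vtx n m)} (hcard : D.card ≤ n)
    (hD : IsDomSet (H13 C) ↑D) : ∃ κ, D = transversal κ := by
  have meets_triangle (i : Fin n) : ∃ k, var i k ∈ D := by
    rcases hD (var i 2) with h | ⟨u, hu, hadj⟩
    · exact ⟨2, h⟩
    · obtain ⟨k, rfl⟩ := exists_eq_var_of_adj_var_two C hadj
      exact ⟨k, hu⟩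
  choose κ hκ using meets_triangle
  have hsub : transversal κ ⊆ D := by
    simpa [transversal, Finset.image_subset_iff] using hκ
  exact ⟨κ, (Finset.eq_of_subset_of_card_le hsub (hcard.trans (card_transversal κ).ge)).symm⟩

end H13

/-- `H` has a dominating set of cardinality at most `n` iff the monotone CNF formula
encoded by `C` is satisfiable. -/
theorem domset_iff_monotone_sat (n m : ℕ) (C : Fin m → Finset (Fin n) × Bool) :
    (∃ D : Finset (Vtx n m), D.card ≤ n ∧ IsDomSet (H13 C) ↑D) ↔
      (∃ σ : Fin n → Bool, ∀ j : Fin m, ∃ i ∈ (C j).1, σ i = (C j).2) := by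
  constructor
  · rintro ⟨D, hcard, hD⟩
    obtain ⟨κ, rfl⟩ := H13.eq_transversal_of_isDomSet C hcard hD
    refine ⟨fun i => decide (κ i = 0), fun j => ?_⟩
    obtain ⟨i, hi, hlit⟩ := (H13.isDomSet_transversal_iff C κ).1 hD j
    refine ⟨i, hi, ?_⟩
    rcases hlit with ⟨hk, hj⟩ | ⟨hk, hj⟩ <;> simp [hk, hj]
  · rintro ⟨σ, hσ⟩
    refine ⟨Vtx.transversal fun i => if σ i then 0 else 1, (Vtx.card_transversal _).le,
      (H13.isDomSet_transversal_iff C _).2 fun j => ?_⟩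
    obtain ⟨i, hi, hσi⟩ := hσ j
    refine ⟨i, hi, ?_⟩
    cases h : (C j).2 <;> simp [hσi, h]
end

section
/- Let a, b : Fin n → ℝ take positive values with a injective and b injective, and let F i = T(a i, b i) be the corresponding axes-crossing L-frames. Then for all i ≠ j, F i ∩ F j ≠ ∅ if and only if (a i - a j) · (b i - b j) < 0. (Hence the intersection graph of L-frames that all cross a fixed vertical line and a fixed horizontal line equals the inversion graph of two linear orders, i.e., it is a permutation graph.) -/
/-! With distinct parameters, two frames can only meet where the vertical segment of one crosses
the horizontal segment of the other. If `a₁ < a₂`, the only candidate is `(-a₁, -b₂)`, and since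
`a₁, b₂ ≥ 0` it lies on both frames exactly when `b₂ ≤ b₁`. -/

/-- The axes-crossing L-frame `T(a,b) = ({-a} × [-b, 0]) ∪ ([-a, 0] × {-b})`. -/
def Tframe (a b : ℝ) : Set (ℝ × ℝ) :=
  ({-a} : Set ℝ) ×ˢ Set.Icc (-b) 0 ∪ Set.Icc (-a) 0 ×ˢ ({-b} : Set ℝ)

theorem mem_Tframe {a b : ℝ} {p : ℝ × ℝ} :
    p ∈ Tframe a b ↔ p.1 = -a ∧ -b ≤ p.2 ∧ p.2 ≤ 0 ∨ (-a ≤ p.1 ∧ p.1 ≤ 0) ∧ p.2 = -b := by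
  simp only [Tframe, Set.mem_union, Set.mem_prod, Set.mem_singleton_iff, Set.mem_Icc]

theorem Tframe_inter_nonempty_iff_of_lt {a₁ b₁ a₂ b₂ : ℝ} (ha₁ : 0 ≤ a₁) (hb₂ : 0 ≤ b₂)
    (ha : a₁ < a₂) (hb : b₁ ≠ b₂) :
    (Tframe a₁ b₁ ∩ Tframe a₂ b₂).Nonempty ↔ b₂ < b₁ := by
  constructor
  · rintro ⟨⟨x, y⟩, h₁, h₂⟩
    rw [mem_Tframe] at h₁ h₂
    rcases h₁ with ⟨rfl, hy₁, -⟩ | ⟨⟨hx₁, -⟩, rfl⟩ <;>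
      rcases h₂ with ⟨hx₂, -, -⟩ | ⟨-, hy₂⟩
    · linarith
    · exact lt_of_le_of_ne (by linarith) hb.symm
    · linarith
    · exact absurd (neg_injective hy₂) hb
  · intro hlt
    exact ⟨(-a₁, -b₂), mem_Tframe.2 (.inl ⟨rfl, by linarith, by linarith⟩),
      mem_Tframe.2 (.inr ⟨⟨by linarith, by linarith⟩, rfl⟩)⟩

theorem Tframe_inter_nonempty_iff {a₁ b₁ a₂ b₂ : ℝ} (ha₁ : 0 ≤ a₁) (hb₁ : 0 ≤ b₁)
    (ha₂ : 0 ≤ a₂) (hb₂ : 0 ≤ b₂) (ha : a₁ ≠ a₂) (hb : b₁ ≠ b₂) :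
    (Tframe a₁ b₁ ∩ Tframe a₂ b₂).Nonempty ↔ (a₁ - a₂) * (b₁ - b₂) < 0 := by
  rcases ha.lt_or_gt with ha | ha
  · rw [Tframe_inter_nonempty_iff_of_lt ha₁ hb₂ ha hb, mul_neg_iff]
    constructor
    · intro hlt; right; constructor <;> linarith
    · rintro (⟨h, -⟩ | ⟨-, h⟩) <;> linarith
  · rw [Set.inter_comm, Tframe_inter_nonempty_iff_of_lt ha₂ hb₁ ha hb.symm, mul_neg_iff]
    constructor
    · intro hlt; left; constructor <;> linarith
    · rintro (⟨-, h⟩ | ⟨h, -⟩) <;> linarith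

/-- Two axes-crossing L-frames (from a family with injective parameters) intersect iff
the corresponding parameter pairs form an inversion: the intersection graph is the
permutation graph of the two linear orders. -/
theorem axes_crossing_frames_inter_iff_inversion (n : ℕ) (a b : Fin n → ℝ)
    (ha : ∀ i, 0 < a i) (hb : ∀ i, 0 < b i)
    (hainj : Function.Injective a) (hbinj : Function.Injective b)
    (F : Fin n → Set (ℝ × ℝ)) (hF : ∀ i, F i = Tframe (a i) (b i)) :
    ∀ i j, i ≠ j → ((F i ∩ F j).Nonempty ↔ (a i - a j) * (b i - b j) < 0) := by
  intro i j hij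
  rw [hF, hF]
  exact Tframe_inter_nonempty_iff (ha i).le (hb i).le (ha j).le (hb j).le
    (hainj.ne hij) (hbinj.ne hij)
end

section
/- Let E be a finite set of pairs of natural numbers (the edges of a bipartite graph with parts indexed by the first and second coordinates), and for e = (i,j) ∈ E let F e = T(i+1, j+1) be the corresponding axes-crossing L-frame. Then for every natural number k, the following are equivalent: (1) there is S ⊆ E with |S| ≤ k such that every e ∈ E shares a coordinate with some f ∈ S (i.e., e.1 = f.1 or e.2 = f.2) — an edge dominating set of size at most k; (2) there is D ⊆ E with |D| ≤ k such that every e ∈ E is in D or there exists f ∈ D with f ≠ e and F e ∩ F f infinite — a dominating set of size at most k of the edge-intersection graph of the frames. -/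
open Set

lemma Tframe_inter_subset_of_ne {a b a' b' : ℝ} (ha : a ≠ a') (hb : b ≠ b') :
    Tframe a b ∩ Tframe a' b' ⊆ {(-a, -b'), (-a', -b)} := by
  rintro ⟨x, y⟩ ⟨h, h'⟩
  simp only [Tframe, mem_union, mem_prod, mem_singleton_iff] at h h'
  rcases h with ⟨rfl, -⟩ | ⟨-, rfl⟩ <;> rcases h' with ⟨hx, -⟩ | ⟨-, hy⟩
  · exact absurd (neg_injective hx) ha
  · simp [hy]
  · simp [hx]
  · exact absurd (neg_injective hy) hb

lemma prod_Icc_min_subset_Tframe_inter (a b b' : ℝ) :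
    ({-a} : Set ℝ) ×ˢ Icc (-min b b') 0 ⊆ Tframe a b ∩ Tframe a b' := by
  rintro ⟨x, y⟩ ⟨hx, hy, hy0⟩
  refine ⟨Or.inl ⟨hx, ?_, hy0⟩, Or.inl ⟨hx, ?_, hy0⟩⟩ <;>
    linarith [min_le_left b b', min_le_right b b']

lemma Icc_min_prod_subset_Tframe_inter (a a' b : ℝ) :
    Icc (-min a a') 0 ×ˢ ({-b} : Set ℝ) ⊆ Tframe a b ∩ Tframe a' b := by
  rintro ⟨x, y⟩ ⟨⟨hx, hx0⟩, hy⟩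
  refine ⟨Or.inr ⟨⟨?_, hx0⟩, hy⟩, Or.inr ⟨⟨?_, hx0⟩, hy⟩⟩ <;>
    linarith [min_le_left a a', min_le_right a a']

lemma Tframe_inter_infinite_iff {a b a' b' : ℝ} (ha : 0 < a) (hb : 0 < b)
    (ha' : 0 < a') (hb' : 0 < b') :
    (Tframe a b ∩ Tframe a' b').Infinite ↔ a = a' ∨ b = b' := by
  refine ⟨fun h => ?_, ?_⟩
  · by_contra! hne
    exact h ((toFinite _).subset (Tframe_inter_subset_of_ne hne.1 hne.2))
  · rintro (rfl | rfl)
    · exact ((Icc_infinite (by simp [hb, hb'])).prod_right (singleton_nonempty _)).mono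
        (prod_Icc_min_subset_Tframe_inter a b b')
    · exact ((Icc_infinite (by simp [ha, ha'])).prod_left (singleton_nonempty _)).mono
        (Icc_min_prod_subset_Tframe_inter a a' b)

lemma Tframe_succ_inter_infinite_iff (e f : ℕ × ℕ) :
    (Tframe ((e.1 : ℝ) + 1) ((e.2 : ℝ) + 1) ∩
      Tframe ((f.1 : ℝ) + 1) ((f.2 : ℝ) + 1)).Infinite ↔ e.1 = f.1 ∨ e.2 = f.2 := by
  rw [Tframe_inter_infinite_iff (by positivity) (by positivity) (by positivity) (by positivity)]
  simp only [add_left_inj, Nat.cast_inj]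

lemma Finset.exists_mem_rel_iff_mem_or_exists_ne {α : Type*} {r : α → α → Prop}
    (hr : ∀ a, r a a) (S : Finset α) (e : α) :
    (∃ f ∈ S, r e f) ↔ e ∈ S ∨ ∃ f ∈ S, f ≠ e ∧ r e f := by
  refine ⟨fun ⟨f, hf, hef⟩ => ?_, ?_⟩
  · obtain rfl | hne := eq_or_ne f e
    exacts [Or.inl hf, Or.inr ⟨f, hf, hne, hef⟩]
  · rintro (he | ⟨f, hf, -, hef⟩)
    exacts [⟨e, he, hr e⟩, ⟨f, hf, hef⟩]

/-- A bipartite graph given by a finite edge set `E ⊆ ℕ × ℕ` has an edge dominating set of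
size at most `k` iff the edge-intersection graph of the L-frames `T(i+1, j+1)`, `(i,j) ∈ E`,
has a dominating set of size at most `k`. -/
theorem edge_domset_iff_epg_domset (E : Finset (ℕ × ℕ)) (k : ℕ) :
    (∃ S ⊆ E, S.card ≤ k ∧ ∀ e ∈ E, ∃ f ∈ S, e.1 = f.1 ∨ e.2 = f.2) ↔
      (∃ D ⊆ E, D.card ≤ k ∧ ∀ e ∈ E, e ∈ D ∨ ∃ f ∈ D, f ≠ e ∧
        (Tframe ((e.1 : ℝ) + 1) ((e.2 : ℝ) + 1) ∩
          Tframe ((f.1 : ℝ) + 1) ((f.2 : ℝ) + 1)).Infinite) := by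
  simp only [Tframe_succ_inter_infinite_iff,
    ← Finset.exists_mem_rel_iff_mem_or_exists_ne (r := fun e f : ℕ × ℕ => e.1 = f.1 ∨ e.2 = f.2)
      fun _ => Or.inl rfl]
end
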